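/- If all arc costs are integer and ε < 1/n, then any ε-optimal feasible flow is an optimal solution of the minimum-cost flow problem. -/

import Mathlib

/-!
An `ε`-optimal potential `π` can be rounded to an integral one that is `0`-optimal: with `n ε < 1`
there is a shift `θ` keeping every `π v + θ` at least `ε` above an integer, and then, costs being
integral, `⌊π + θ⌋` has nonnegative reduced cost on every residual arc. A feasible flow with such a
potential is optimal by complementary slackness, since the potential terms of the reduced costs
cancel along the circulation `y - x`.
-/

open Finset

variable {V A : Type}

/-- Excess of node `i` with respect to pseudoflow `x` and supplies `b`. -/
def excess [Fintype A] [DecidableEq V] (src tgt : A → V) (b : V → ℤ)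
    (x : A → ℤ) (i : V) : ℤ :=
  b i + ∑ a ∈ Finset.univ.filter (fun a => tgt a = i), x a
      - ∑ a ∈ Finset.univ.filter (fun a => src a = i), x a

/-- A pseudoflow obeys the nonnegativity and capacity constraints. -/
def IsPseudoflow (cap x : A → ℤ) : Prop := ∀ a, 0 ≤ x a ∧ x a ≤ cap a

/-- A feasible flow: pseudoflow satisfying the conservation constraints. -/
def IsFeasible [Fintype A] [DecidableEq V] (src tgt : A → V) (b : V → ℤ)
    (cap x : A → ℤ) : Prop :=
  IsPseudoflow cap x ∧ ∀ i, excess src tgt b x i = 0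

/-- Total cost of a flow. -/
def flowCost [Fintype A] (c x : A → ℤ) : ℤ := ∑ a, c a * x a

/-- An optimal solution of the minimum-cost flow problem. -/
def IsOptimal [Fintype A] [DecidableEq V] (src tgt : A → V) (b : V → ℤ)
    (cap c x : A → ℤ) : Prop :=
  IsFeasible src tgt b cap x ∧
    ∀ y, IsFeasible src tgt b cap y → flowCost c x ≤ flowCost c y

/-- Source of a residual arc: `(a, true)` is the forward copy of `a`,
`(a, false)` the backward copy. -/
def rsrc (src tgt : A → V) (p : A × Bool) : V := if p.2 then src p.1 else tgt p.1

/-- Target of a residual arc. -/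
def rtgt (src tgt : A → V) (p : A × Bool) : V := if p.2 then tgt p.1 else src p.1

/-- Cost of a residual arc. -/
def rcost (c : A → ℤ) (p : A × Bool) : ℤ := if p.2 then c p.1 else -c p.1

/-- Whether a (forward/backward) arc is present in the residual network of `x`. -/
def IsResidual (cap x : A → ℤ) (p : A × Bool) : Prop :=
  if p.2 then x p.1 < cap p.1 else 0 < x p.1

/-- Reduced cost of a residual arc with respect to potentials `π`. -/
def redcost (src tgt : A → V) (c : A → ℤ) (π : V → ℝ) (p : A × Bool) : ℝ :=
  (rcost c p : ℝ) + π (rsrc src tgt p) - π (rtgt src tgt p)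

/-- A directed cycle (closed directed walk), given by `k > 0` arcs in cyclic order. -/
def IsCycle {E : Type} (s t : E → V) {k : ℕ} (hk : 0 < k) (cyc : Fin k → E) : Prop :=
  ∀ i : Fin k, t (cyc i) = s (cyc ⟨(i.1 + 1) % k, Nat.mod_lt _ hk⟩)

/-- Underlying undirected (simple) graph of the arcs in `T`. -/
def underlying (src tgt : A → V) (T : Finset A) : SimpleGraph V where
  Adj i j := i ≠ j ∧ ∃ a ∈ T, (src a = i ∧ tgt a = j) ∨ (src a = j ∧ tgt a = i)
  symm := by
    refine ⟨?_⟩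
    rintro i j ⟨hij, a, haT, h⟩
    exact ⟨hij.symm, a, haT, h.symm⟩
  loopless := by refine ⟨?_⟩; rintro i ⟨h, -⟩; exact h rfl

/-- Total excess of the excess nodes. -/
def totalExcess [Fintype V] [Fintype A] [DecidableEq V]
    (src tgt : A → V) (b : V → ℤ) (x : A → ℤ) : ℤ :=
  ∑ i ∈ Finset.univ.filter (fun i => 0 < excess src tgt b x i), excess src tgt b x i

open Function

theorem Function.exists_mem_periodicPts {α : Type*} [Finite α] [Nonempty α] (f : α → α) :
    ∃ x, x ∈ periodicPts f := by
  obtain ⟨x⟩ := ‹Nonempty α›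
  obtain ⟨m, n, hmn, hne⟩ := Function.not_injective_iff.1
    (not_injective_infinite_finite fun k : ℕ => f^[k] x)
  wlog hlt : m < n generalizing m n
  · exact this n m hmn.symm hne.symm (by omega)
  refine ⟨f^[m] x, mk_mem_periodicPts (n := n - m) (by omega) ?_⟩
  rw [IsPeriodicPt, IsFixedPt, ← iterate_add_apply, Nat.sub_add_cancel hlt.le]
  exact hmn.symm

theorem exists_forall_le_fract_add {ι : Type*} [Fintype ι] (φ : ι → ℝ) {ε : ℝ}
    (hε : ε < 1 / Fintype.card ι) : ∃ θ : ℝ, ∀ i, ε ≤ Int.fract (φ i + θ) := by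
  by_contra! hbad
  -- Each candidate shift `ε - φ j` is spoiled by some `f j`; around a cycle of `f` the floors of
  -- the spoiling values sum to an integer strictly between `0` and `1`.
  choose f hf using fun j => hbad (ε - φ j)
  obtain ⟨i₀, -⟩ := hbad 0
  have : Nonempty ι := ⟨i₀⟩
  obtain ⟨w, hw⟩ := exists_mem_periodicPts f
  set k := minimalPeriod f w
  have hk : 0 < k := minimalPeriod_pos_of_mem_periodicPts hw
  have hkcard : (k : ℝ) ≤ Fintype.card ι := by exact_mod_cast minimalPeriod_le_card
  set a : ℕ → ℝ := fun i => φ (f^[i + 1] w) - φ (f^[i] w) + ε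
  have hsum : ∑ i ∈ range k, a i = k * ε := by
    have hloop : f^[k] w = w := (isPeriodicPt_minimalPeriod f w).eq
    simp only [a, sum_add_distrib, sum_range_sub (fun i => φ (f^[i] w)), hloop,
      iterate_zero_apply, sub_self, sum_const, card_range, nsmul_eq_mul, zero_add]
  have hfloor_gt : ∀ i, a i - ε < ⌊a i⌋ := fun i => by
    have ha : φ (f (f^[i] w)) + (ε - φ (f^[i] w)) = a i := by
      simp only [a, iterate_succ_apply']
      ring
    have := hf (f^[i] w)
    rw [ha, ← Int.self_sub_floor] at this
    linarith
  have hε_pos : 0 < ε := (Int.fract_nonneg _).trans_lt (hf i₀)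
  have hkε : (k : ℝ) * ε < 1 := by
    have hcard : (0 : ℝ) < Fintype.card ι := by linarith [show (0 : ℝ) < k by exact_mod_cast hk]
    calc (k : ℝ) * ε ≤ Fintype.card ι * ε := by gcongr
      _ < 1 := by rwa [lt_div_iff₀ hcard, mul_comm] at hε
  have hpos : (0 : ℝ) < ∑ i ∈ range k, ⌊a i⌋ :=
    calc (0 : ℝ) = ∑ i ∈ range k, (a i - ε) := by
          rw [sum_sub_distrib, hsum, sum_const, card_range, nsmul_eq_mul, sub_self]
      _ < _ := by
          push_cast
          exact sum_lt_sum_of_nonempty (nonempty_range_iff.2 hk.ne') fun i _ => hfloor_gt i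
  have hlt : ((∑ i ∈ range k, ⌊a i⌋ : ℤ) : ℝ) < 1 :=
    calc ((∑ i ∈ range k, ⌊a i⌋ : ℤ) : ℝ) ≤ ∑ i ∈ range k, a i := by
          push_cast
          exact sum_le_sum fun i _ => Int.floor_le (a i)
      _ < 1 := hsum ▸ hkε
  have h0 : 0 < ∑ i ∈ range k, ⌊a i⌋ := by exact_mod_cast hpos
  have h1 : ∑ i ∈ range k, ⌊a i⌋ < 1 := by exact_mod_cast hlt
  omega

theorem floor_le_intCast_add_floor {c : ℤ} {a b ε : ℝ} (h : b ≤ c + a + ε)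
    (hb : ε ≤ Int.fract b) : ⌊b⌋ ≤ c + ⌊a⌋ := by
  rw [← Int.floor_intCast_add, Int.le_floor, ← Int.self_sub_floor] at *
  linarith

section Residual

variable {src tgt : A → V}

theorem redcost_backward (c : A → ℤ) (π : V → ℝ) (a : A) :
    redcost src tgt c π (a, false) = -redcost src tgt c π (a, true) := by
  simp only [redcost, rcost, rsrc, rtgt, Bool.false_eq_true, if_false, if_true, Int.cast_neg]
  ring

theorem exists_redcost_nonneg_of_eps_optimal [Fintype V] {cap c x : A → ℤ} {ε : ℝ}
    (hε : ε < 1 / Fintype.card V) (π : V → ℝ)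
    (hπ : ∀ p, IsResidual cap x p → -ε ≤ redcost src tgt c π p) :
    ∃ π' : V → ℝ, ∀ p, IsResidual cap x p → 0 ≤ redcost src tgt c π' p := by
  obtain ⟨θ, hθ⟩ := exists_forall_le_fract_add π hε
  refine ⟨fun v => ⌊π v + θ⌋, fun p hp => ?_⟩
  have hp' := hπ p hp
  simp only [redcost] at hp' ⊢
  have hfloor := floor_le_intCast_add_floor (c := rcost c p) (a := π (rsrc src tgt p) + θ)
    (by linarith) (hθ (rtgt src tgt p))
  have : ((⌊π (rtgt src tgt p) + θ⌋ : ℤ) : ℝ) ≤ rcost c p + ⌊π (rsrc src tgt p) + θ⌋ := by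
    exact_mod_cast hfloor
  linarith

theorem redcost_mul_sub_nonneg {cap c x y : A → ℤ} {π : V → ℝ} (hy : IsPseudoflow cap y)
    (hπ : ∀ p, IsResidual cap x p → 0 ≤ redcost src tgt c π p) (a : A) :
    0 ≤ redcost src tgt c π (a, true) * ((y a - x a : ℤ) : ℝ) := by
  rcases lt_trichotomy (x a) (y a) with hlt | heq | hgt
  · have hres : IsResidual cap x (a, true) := show x a < cap a by linarith [(hy a).2]
    exact mul_nonneg (hπ _ hres) (by exact_mod_cast (sub_pos.2 hlt).le)
  · simp [heq]
  · have hres : IsResidual cap x (a, false) := show 0 < x a by linarith [(hy a).1]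
    have := hπ _ hres
    rw [redcost_backward] at this
    exact mul_nonneg_of_nonpos_of_nonpos (by linarith) (by exact_mod_cast (sub_neg.2 hgt).le)

end Residual

section Circulation

variable [Fintype A] [DecidableEq V] (src tgt : A → V)

def IsCirculation {R : Type*} [AddCommMonoid R] (d : A → R) : Prop :=
  ∀ v, ∑ a ∈ univ.filter (fun a => src a = v), d a = ∑ a ∈ univ.filter (fun a => tgt a = v), d a

variable {src tgt}

theorem IsCirculation.intCast {R : Type*} [AddCommGroupWithOne R] {d : A → ℤ}
    (h : IsCirculation src tgt d) : IsCirculation src tgt fun a => (d a : R) := fun v => by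
  rw [← Int.cast_sum, ← Int.cast_sum, h v]

theorem IsCirculation.sum_potential_sub_mul_eq_zero [Fintype V] {R : Type*} [CommRing R]
    {d : A → R} (h : IsCirculation src tgt d) (π : V → R) :
    ∑ a, (π (src a) - π (tgt a)) * d a = 0 := by
  have hfib : ∀ s : A → V, ∑ a, π (s a) * d a
      = ∑ v, π v * ∑ a ∈ univ.filter (fun a => s a = v), d a := fun s => by
    simp only [mul_sum]
    rw [← sum_fiberwise univ s]
    refine sum_congr rfl fun v _ => sum_congr rfl fun a ha => ?_
    rw [(mem_filter.1 ha).2]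
  simp only [sub_mul, sum_sub_distrib, hfib src, hfib tgt, h _, sub_self]

theorem isCirculation_sub_of_isFeasible {b : V → ℤ} {cap x y : A → ℤ}
    (hx : IsFeasible src tgt b cap x) (hy : IsFeasible src tgt b cap y) :
    IsCirculation src tgt (y - x) := fun v => by
  have hxv := hx.2 v
  have hyv := hy.2 v
  simp only [excess] at hxv hyv
  simp only [Pi.sub_apply, sum_sub_distrib]
  linarith

theorem isOptimal_of_redcost_nonneg [Fintype V] {b : V → ℤ} {cap c x : A → ℤ}
    (hx : IsFeasible src tgt b cap x) (π : V → ℝ)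
    (hπ : ∀ p, IsResidual cap x p → 0 ≤ redcost src tgt c π p) :
    IsOptimal src tgt b cap c x := by
  refine ⟨hx, fun y hy => ?_⟩
  have hcirc : IsCirculation src tgt fun a => ((y a - x a : ℤ) : ℝ) :=
    (isCirculation_sub_of_isFeasible hx hy).intCast
  have hdiff : ((flowCost c y - flowCost c x : ℤ) : ℝ)
      = ∑ a, redcost src tgt c π (a, true) * ((y a - x a : ℤ) : ℝ) := by
    have hsplit : ∀ a, redcost src tgt c π (a, true) = c a + (π (src a) - π (tgt a)) := fun a => by
      simp only [redcost, rcost, rsrc, rtgt, if_true]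
      ring
    simp only [hsplit, add_mul, sum_add_distrib, hcirc.sum_potential_sub_mul_eq_zero, add_zero,
      flowCost]
    push_cast
    simp only [mul_sub, sum_sub_distrib]
  have : (0 : ℝ) ≤ ((flowCost c y - flowCost c x : ℤ) : ℝ) :=
    hdiff ▸ sum_nonneg fun a _ => redcost_mul_sub_nonneg hy.1 hπ a
  exact sub_nonneg.1 (mod_cast this)

end Circulation

theorem eps_opt_lt_inv_card_is_optimal_general [Fintype V] [Fintype A] [DecidableEq V]
    (src tgt : A → V) (b : V → ℤ) (cap c x : A → ℤ) (ε : ℝ)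
    (hn : ε < 1 / (Fintype.card V : ℝ))
    (hfeas : IsFeasible src tgt b cap x)
    (hepsopt : ∃ π : V → ℝ, ∀ p : A × Bool, IsResidual cap x p →
        -ε ≤ redcost src tgt c π p) :
    IsOptimal src tgt b cap c x := by
  obtain ⟨π, hπ⟩ := hepsopt
  obtain ⟨π', hπ'⟩ := exists_redcost_nonneg_of_eps_optimal hn π hπ
  exact isOptimal_of_redcost_nonneg hfeas π' hπ'

/-- with integer costs, an `ε`-optimal feasible flow with `ε < 1/n`
is an optimal solution. -/
theorem eps_opt_lt_inv_card_is_optimal [Fintype V] [Fintype A] [DecidableEq V]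
    (src tgt : A → V) (b : V → ℤ) (cap c x : A → ℤ) (ε : ℝ)
    (hε : 0 ≤ ε) (hn : ε < 1 / (Fintype.card V : ℝ))
    (hfeas : IsFeasible src tgt b cap x)
    (hepsopt : ∃ π : V → ℝ, ∀ p : A × Bool, IsResidual cap x p →
        -ε ≤ redcost src tgt c π p) :
    IsOptimal src tgt b cap c x :=
  eps_opt_lt_inv_card_is_optimal_general src tgt b cap c x ε hn hfeas hepsopt
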